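/- arXiv:2405.08996 — 2 statements merged into one kernel-verified Lean document; each statement's English description precedes it below -/
import Mathlib

section
/- Let σ > 0, δ ∈ (0,1), and let (ε_{i,k}), for i ∈ {1,…,m} and k ∈ {1,2,3}, be independent random variables each uniformly distributed on the interval [-σ, σ]. Define σ_j² = (1/3) · Σ_{k=1}^{3} ( (1/m) · Σ_{i=1}^{m} (ε_{i,k} - (1/m) Σ_{i'=1}^{m} ε_{i',k})² ). Then with probability at least 1 - δ, |σ_j² - σ²/3| ≤ 4σ² · √( (2/(3m)) · log(2/δ) ). -/
/-!
Write the average of the three empirical variances as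
`(1 / 3m) ∑_{i,k} (ε_{ik}² - σ²/3) - (1 / 3) ∑_k ε̄_k²` with `ε̄_k` the mean of column `k`.
Both the `3m` centred squares `ε_{ik}² - σ²/3 ∈ [-σ²/3, 2σ²/3]` and the `m` entries of a column
are independent, bounded and centred, so Hoeffding's inequality controls the first term and each
`ε̄_k²`; with `t = √(2 log(2/δ) / 3m)` each of the four tails is at most `2 (δ/2)⁴`.
This needs `t < 1/6`; for larger `t` the claim holds almost surely, since the average empirical
variance lies in `[0, σ²]`.
-/

open MeasureTheory ProbabilityTheory Real Set
open scoped NNReal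

noncomputable def empiricalVariance {m : ℕ} (v : Fin m → ℝ) : ℝ :=
  (1 / (m : ℝ)) * ∑ i, (v i - (1 / (m : ℝ)) * ∑ i', v i') ^ 2

noncomputable def avgEmpiricalVariance {m : ℕ} {κ : Type*} [Fintype κ] (x : Fin m → κ → ℝ) :
    ℝ :=
  (1 / (Fintype.card κ : ℝ)) * ∑ k, empiricalVariance (fun i => x i k)

section EmpiricalVariance

variable {m : ℕ}

lemma empiricalVariance_nonneg (v : Fin m → ℝ) : 0 ≤ empiricalVariance v := by
  unfold empiricalVariance
  positivity

lemma empiricalVariance_eq (v : Fin m → ℝ) :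
    empiricalVariance v = (1 / (m : ℝ)) * ∑ i, v i ^ 2 - ((1 / (m : ℝ)) * ∑ i, v i) ^ 2 := by
  rcases Nat.eq_zero_or_pos m with rfl | hm
  · simp [empiricalVariance]
  have hm' : (m : ℝ) ≠ 0 := by positivity
  simp only [empiricalVariance, sub_sq, Finset.sum_add_distrib, Finset.sum_sub_distrib,
    ← Finset.sum_mul, ← Finset.mul_sum, Finset.sum_const, Finset.card_univ, Fintype.card_fin,
    nsmul_eq_mul]
  field_simp
  ring

lemma empiricalVariance_le_sq {v : Fin m → ℝ} {σ : ℝ} (hv : ∀ i, |v i| ≤ σ) :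
    empiricalVariance v ≤ σ ^ 2 := by
  have hsq : (1 / (m : ℝ)) * ∑ i, v i ^ 2 ≤ σ ^ 2 := by
    rcases Nat.eq_zero_or_pos m with rfl | hm
    · simp [sq_nonneg]
    calc (1 / (m : ℝ)) * ∑ i, v i ^ 2 ≤ (1 / (m : ℝ)) * ∑ _i : Fin m, σ ^ 2 := by
          gcongr (1 / (m : ℝ)) * ?_
          exact Finset.sum_le_sum fun i _ => sq_le_sq' (abs_le.1 (hv i)).1 (abs_le.1 (hv i)).2
      _ = σ ^ 2 := by simp [hm.ne']
  rw [empiricalVariance_eq]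
  nlinarith [sq_nonneg ((1 / (m : ℝ)) * ∑ i, v i)]

variable {κ : Type*} [Fintype κ] [Nonempty κ]

lemma avgEmpiricalVariance_sub_eq (hm : 0 < m) (x : Fin m → κ → ℝ) (c : ℝ) :
    avgEmpiricalVariance x - c
      = (1 / (Fintype.card κ * m : ℝ)) * ∑ p : Fin m × κ, (x p.1 p.2 ^ 2 - c)
        - (1 / (Fintype.card κ : ℝ)) * ∑ k, ((1 / (m : ℝ)) * ∑ i, x i k) ^ 2 := by
  have hm' : (m : ℝ) ≠ 0 := by positivity
  have hκ : (Fintype.card κ : ℝ) ≠ 0 := by positivity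
  simp only [avgEmpiricalVariance, empiricalVariance_eq, mul_pow, Finset.sum_sub_distrib,
    Fintype.sum_prod_type_right, ← Finset.mul_sum, Finset.sum_const, Finset.card_univ,
    Fintype.card_prod, Fintype.card_fin, nsmul_eq_mul, Nat.cast_mul]
  field_simp
  ring

lemma abs_avgEmpiricalVariance_sub_le (hm : 0 < m) (x : Fin m → κ → ℝ) {c r : ℝ}
    (hsq : |∑ p : Fin m × κ, (x p.1 p.2 ^ 2 - c)| ≤ Fintype.card κ * m * r)
    (hmean : ∀ k, |∑ i, x i k| ≤ m * √r) :
    |avgEmpiricalVariance x - c| ≤ 2 * r := by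
  have hm' : (0 : ℝ) < m := by exact_mod_cast hm
  have hκ : (0 : ℝ) < Fintype.card κ := by exact_mod_cast Fintype.card_pos
  have hsq' : |(1 / (Fintype.card κ * m : ℝ)) * ∑ p : Fin m × κ, (x p.1 p.2 ^ 2 - c)| ≤ r := by
    rw [abs_mul, abs_of_pos (by positivity)]
    calc _ ≤ (1 / (Fintype.card κ * m : ℝ)) * (Fintype.card κ * m * r) := by gcongr
      _ = r := by field_simp
  have hr : 0 ≤ r := (abs_nonneg _).trans hsq'
  have hmean_sq (k : κ) : ((1 / (m : ℝ)) * ∑ i, x i k) ^ 2 ≤ r := by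
    rw [← sq_abs, abs_mul, abs_of_pos (by positivity), ← sq_sqrt hr]
    gcongr
    calc _ ≤ (1 / (m : ℝ)) * (m * √r) := by gcongr; exact hmean k
      _ = √r := by field_simp
  have hmeans : (1 / (Fintype.card κ : ℝ)) * ∑ k, ((1 / (m : ℝ)) * ∑ i, x i k) ^ 2 ≤ r := by
    calc _ ≤ (1 / (Fintype.card κ : ℝ)) * ∑ _k : κ, r := by gcongr with k; exact hmean_sq k
      _ = r := by simp
  have hmeans_nonneg :
      0 ≤ (1 / (Fintype.card κ : ℝ)) * ∑ k, ((1 / (m : ℝ)) * ∑ i, x i k) ^ 2 := by positivity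
  rw [avgEmpiricalVariance_sub_eq hm, abs_le]
  have := abs_le.1 hsq'
  constructor <;> linarith

lemma avgEmpiricalVariance_mem_Icc {x : Fin m → κ → ℝ} {σ : ℝ} (hx : ∀ i k, |x i k| ≤ σ) :
    avgEmpiricalVariance x ∈ Icc 0 (σ ^ 2) := by
  have hκ : (0 : ℝ) < Fintype.card κ := by exact_mod_cast Fintype.card_pos
  refine ⟨mul_nonneg (by positivity) (Finset.sum_nonneg fun k _ => empiricalVariance_nonneg _), ?_⟩
  calc avgEmpiricalVariance x ≤ (1 / (Fintype.card κ : ℝ)) * ∑ _k : κ, σ ^ 2 := by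
        unfold avgEmpiricalVariance
        gcongr with k
        exact empiricalVariance_le_sq fun i => hx i k
    _ = σ ^ 2 := by simp

end EmpiricalVariance

lemma MeasureTheory.ofReal_one_sub_le_of_measure_compl_le {Ω : Type*} [MeasurableSpace Ω]
    {P : Measure Ω} [IsProbabilityMeasure P] {s : Set Ω} {δ : ℝ} (hδ : 0 ≤ δ)
    (h : P sᶜ ≤ ENNReal.ofReal δ) : ENNReal.ofReal (1 - δ) ≤ P s := by
  rw [ENNReal.ofReal_sub 1 hδ, ENNReal.ofReal_one, tsub_le_iff_right, ← measure_univ (μ := P)]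
  exact (measure_univ_le_add_compl s).trans (add_le_add le_rfl h)

namespace MeasureTheory.pdf.IsUniform

variable {Ω : Type*} [MeasurableSpace Ω] {P : Measure Ω} {X : Ω → ℝ} {a b : ℝ}

lemma ae_mem_Icc (hX : IsUniform X (Icc a b) P) (hab : a < b) : ∀ᵐ ω ∂P, X ω ∈ Icc a b := by
  have := hX.measure_preimage (by simp [hab]) (by simp) (measurableSet_Icc (a := a) (b := b)).compl
  rw [inter_compl_self, measure_empty, ENNReal.zero_div] at this
  exact ae_iff.2 this

lemma integral_comp_Icc (hX : IsUniform X (Icc a b) P) (hab : a < b) {f : ℝ → ℝ}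
    (hf : Continuous f) : ∫ ω, f (X ω) ∂P = (b - a)⁻¹ * ∫ x in a..b, f x := by
  have hXm : AEMeasurable X P := hX.aemeasurable (by simp [hab]) (by simp)
  rw [← integral_map hXm hf.aestronglyMeasurable, hX, ProbabilityTheory.cond,
    integral_smul_measure, Real.volume_Icc, ENNReal.toReal_inv, ENNReal.toReal_ofReal (by linarith),
    integral_Icc_eq_integral_Ioc, ← intervalIntegral.integral_of_le hab.le, smul_eq_mul]

lemma integral_eq_zero_of_Icc_neg (hX : IsUniform X (Icc (-a) a) P) (ha : 0 < a) :
    ∫ ω, X ω ∂P = 0 := by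
  simpa using hX.integral_comp_Icc (by linarith) continuous_id

lemma integral_sq_of_Icc_neg (hX : IsUniform X (Icc (-a) a) P) (ha : 0 < a) :
    ∫ ω, X ω ^ 2 ∂P = a ^ 2 / 3 := by
  rw [hX.integral_comp_Icc (by linarith) (continuous_pow 2), integral_pow]
  field_simp
  ring

lemma hasSubgaussianMGF_of_Icc_neg (hX : IsUniform X (Icc (-a) a) P) (ha : 0 < a) :
    HasSubgaussianMGF X (‖a‖₊ ^ 2) P := by
  have : IsProbabilityMeasure P := hX.isProbabilityMeasure (by simp [ha]) (by simp)
  convert hasSubgaussianMGF_of_mem_Icc_of_integral_eq_zero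
    (hX.aemeasurable (by simp [ha]) (by simp)) (hX.ae_mem_Icc (by linarith))
    (hX.integral_eq_zero_of_Icc_neg ha) using 2
  ext
  simp [← two_mul, abs_of_pos ha]

lemma hasSubgaussianMGF_sq_sub_of_Icc_neg (hX : IsUniform X (Icc (-a) a) P) (ha : 0 < a) :
    HasSubgaussianMGF (fun ω => X ω ^ 2 - a ^ 2 / 3) ((‖a ^ 2‖₊ / 2) ^ 2) P := by
  have : IsProbabilityMeasure P := hX.isProbabilityMeasure (by simp [ha]) (by simp)
  have hXm : AEMeasurable X P := hX.aemeasurable (by simp [ha]) (by simp)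
  have hmem : ∀ᵐ ω ∂P, X ω ^ 2 ∈ Icc 0 (a ^ 2) := by
    filter_upwards [hX.ae_mem_Icc (by linarith)] with ω hω
    exact ⟨sq_nonneg _, sq_le_sq' hω.1 hω.2⟩
  simpa [hX.integral_sq_of_Icc_neg ha] using hasSubgaussianMGF_of_mem_Icc (hXm.pow_const 2) hmem

end MeasureTheory.pdf.IsUniform

namespace ProbabilityTheory

variable {Ω : Type*} [MeasurableSpace Ω] {P : Measure Ω} {ι : Type*} {σ b : ℝ}

lemma measure_le_abs_sum_le_of_iIndepFun {X : ι → Ω → ℝ} (hind : iIndepFun X P)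
    {c : ℝ≥0} {s : Finset ι} (hX : ∀ i ∈ s, HasSubgaussianMGF (X i) c P) (hb : 0 ≤ b) :
    P {ω | b ≤ |∑ i ∈ s, X i ω|} ≤ ENNReal.ofReal (2 * exp (-b ^ 2 / (2 * s.card * c))) := by
  have : IsProbabilityMeasure P := hind.isProbabilityMeasure
  have tail {Y : ι → Ω → ℝ} (hind : iIndepFun Y P) (hY : ∀ i ∈ s, HasSubgaussianMGF (Y i) c P) :
      P {ω | b ≤ ∑ i ∈ s, Y i ω} ≤ ENNReal.ofReal (exp (-b ^ 2 / (2 * s.card * c))) := by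
    rw [← ofReal_measureReal]
    refine ENNReal.ofReal_le_ofReal
      ((HasSubgaussianMGF.measure_sum_ge_le_of_iIndepFun hind hY hb).trans_eq ?_)
    simp [mul_assoc]
  have hsub : {ω | b ≤ |∑ i ∈ s, X i ω|}
      ⊆ {ω | b ≤ ∑ i ∈ s, X i ω} ∪ {ω | b ≤ ∑ i ∈ s, (-X i) ω} := by
    intro ω hω
    simpa [Finset.sum_neg_distrib, le_abs] using hω
  calc P {ω | b ≤ |∑ i ∈ s, X i ω|}
      ≤ P {ω | b ≤ ∑ i ∈ s, X i ω} + P {ω | b ≤ ∑ i ∈ s, (-X i) ω} :=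
        (measure_mono hsub).trans (measure_union_le _ _)
    _ ≤ _ := by
      grw [tail hind hX, tail (Y := fun i => -X i)
        (hind.comp (fun _ => Neg.neg) fun _ => measurable_neg) fun i hi => (hX i hi).neg,
        ← ENNReal.ofReal_add (by positivity) (by positivity), ← two_mul]

lemma measure_le_abs_sum_le_of_isUniform {X : ι → Ω → ℝ} (hind : iIndepFun X P)
    (hX : ∀ i, pdf.IsUniform (X i) (Icc (-σ) σ) P) (hσ : 0 < σ) (s : Finset ι) (hb : 0 ≤ b) :
    P {ω | b ≤ |∑ i ∈ s, X i ω|} ≤ ENNReal.ofReal (2 * exp (-b ^ 2 / (2 * s.card * σ ^ 2))) := by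
  simpa using measure_le_abs_sum_le_of_iIndepFun hind
    (fun i _ => (hX i).hasSubgaussianMGF_of_Icc_neg hσ) hb

lemma measure_le_abs_sum_sq_sub_le_of_isUniform {X : ι → Ω → ℝ} (hind : iIndepFun X P)
    (hX : ∀ i, pdf.IsUniform (X i) (Icc (-σ) σ) P) (hσ : 0 < σ) (s : Finset ι) (hb : 0 ≤ b) :
    P {ω | b ≤ |∑ i ∈ s, (X i ω ^ 2 - σ ^ 2 / 3)|}
      ≤ ENNReal.ofReal (2 * exp (-2 * b ^ 2 / (s.card * σ ^ 4))) := by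
  have hind' : iIndepFun (fun i ω => X i ω ^ 2 - σ ^ 2 / 3) P :=
    hind.comp (fun _ x => x ^ 2 - σ ^ 2 / 3) fun _ => by fun_prop
  convert measure_le_abs_sum_le_of_iIndepFun hind'
    (fun i _ => (hX i).hasSubgaussianMGF_sq_sub_of_Icc_neg hσ) hb using 4
  simp only [NNReal.coe_pow, NNReal.coe_div, NNReal.coe_ofNat, coe_nnnorm, norm_pow, norm_eq_abs,
    sq_abs]
  field_simp

variable {κ : Type*} [Fintype κ] [Nonempty κ] {m : ℕ} {X : Fin m → κ → Ω → ℝ}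

lemma ae_avgEmpiricalVariance_mem_Icc (hX : ∀ i k, pdf.IsUniform (X i k) (Icc (-σ) σ) P)
    (hσ : 0 < σ) : ∀ᵐ ω ∂P, avgEmpiricalVariance (fun i k => X i k ω) ∈ Icc 0 (σ ^ 2) := by
  have hbdd : ∀ᵐ ω ∂P, ∀ i k, |X i k ω| ≤ σ :=
    ae_all_iff.2 fun i => ae_all_iff.2 fun k =>
      ((hX i k).ae_mem_Icc (by linarith)).mono fun ω h => abs_le.2 h
  exact hbdd.mono fun ω h => avgEmpiricalVariance_mem_Icc h

lemma measure_lt_abs_avgEmpiricalVariance_sub_le (hm : 0 < m)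
    (hind : iIndepFun (fun p : Fin m × κ => X p.1 p.2) P)
    (hX : ∀ i k, pdf.IsUniform (X i k) (Icc (-σ) σ) P) (hσ : 0 < σ) {t : ℝ} (ht : 0 ≤ t) :
    P {ω | 4 * σ ^ 2 * t < |avgEmpiricalVariance (fun i k => X i k ω) - σ ^ 2 / 3|}
      ≤ ENNReal.ofReal (2 * exp (-(8 * Fintype.card κ * m * t ^ 2))
          + Fintype.card κ * (2 * exp (-(m * t)))) := by
  set r := 2 * σ ^ 2 * t
  set Esq := {ω | Fintype.card κ * m * r ≤ |∑ p : Fin m × κ, (X p.1 p.2 ω ^ 2 - σ ^ 2 / 3)|}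
  set Emean : κ → Set Ω := fun k => {ω | m * √r ≤ |∑ i, X i k ω|}
  have hsub : {ω | 4 * σ ^ 2 * t < |avgEmpiricalVariance (fun i k => X i k ω) - σ ^ 2 / 3|}
      ⊆ Esq ∪ ⋃ k, Emean k := by
    intro ω
    contrapose
    simp only [Esq, Emean, mem_union, mem_iUnion, not_or, not_exists, mem_ofPred_eq, not_le,
      not_lt]
    refine fun h => (abs_avgEmpiricalVariance_sub_le hm _ h.1.le fun k => (h.2 k).le).trans ?_
    linarith
  have hEsq : P Esq ≤ ENNReal.ofReal (2 * exp (-(8 * Fintype.card κ * m * t ^ 2))) := by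
    convert measure_le_abs_sum_sq_sub_le_of_isUniform (b := Fintype.card κ * m * r) hind
      (fun p => hX p.1 p.2) hσ Finset.univ (by positivity) using 4
    simp only [r, Finset.card_univ, Fintype.card_prod, Fintype.card_fin, Nat.cast_mul]
    field_simp
    ring
  have hEmean (k : κ) : P (Emean k) ≤ ENNReal.ofReal (2 * exp (-(m * t))) := by
    convert measure_le_abs_sum_le_of_isUniform (b := m * √r)
      (hind.precomp (g := fun i => (i, k)) fun i j h => (Prod.ext_iff.1 h).1) (fun i => hX i k) hσ
      Finset.univ (by positivity) using 4
    simp only [r, Finset.card_univ, Fintype.card_fin, mul_pow, sq_sqrt (by positivity : 0 ≤ r)]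
    field_simp
  calc _ ≤ P Esq + ∑ k, P (Emean k) :=
        (measure_mono hsub).trans ((measure_union_le _ _).trans
          (add_le_add le_rfl (measure_iUnion_fintype_le _ _)))
    _ ≤ ENNReal.ofReal (2 * exp (-(8 * Fintype.card κ * m * t ^ 2)))
        + ∑ _k : κ, ENNReal.ofReal (2 * exp (-(m * t))) := by
        gcongr with k
        exact hEmean k
    _ = _ := by
        rw [← ENNReal.ofReal_sum_of_nonneg fun _ _ => by positivity,
          ← ENNReal.ofReal_add (by positivity) (by positivity), Finset.sum_const, nsmul_eq_mul,
          Finset.card_univ]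

end ProbabilityTheory

-- Each of the four tail terms is at most `2 (δ/2)⁴`:
-- `24 m t² = 16 log (2/δ)`, and `m t ≥ 4 log (2/δ)` because `t < 1/6`.
lemma two_mul_exp_add_three_mul_le {δ m t : ℝ} (hδ₀ : 0 < δ) (hδ₁ : δ < 1) (ht : 0 < t)
    (ht₁ : t < 1 / 6) (hmt : m * t ^ 2 = 2 / 3 * log (2 / δ)) :
    2 * exp (-(8 * 3 * m * t ^ 2)) + 3 * (2 * exp (-(m * t))) ≤ δ := by
  set L := log (2 / δ)
  have hL : 0 < L := log_pos (by rw [lt_div_iff₀ hδ₀]; linarith)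
  have hexp : exp (-(4 * L)) = (δ / 2) ^ 4 := by
    rw [show -(4 * L) = (4 : ℕ) * -L by push_cast; ring, exp_nat_mul, exp_neg,
      exp_log (by positivity), inv_div]
  have hsq : exp (-(8 * 3 * m * t ^ 2)) ≤ exp (-(4 * L)) := exp_le_exp.2 (by nlinarith)
  have hmean : exp (-(m * t)) ≤ exp (-(4 * L)) := exp_le_exp.2 (by nlinarith)
  have hδ3 : δ ^ 3 ≤ 1 := pow_le_one₀ hδ₀.le hδ₁.le
  nlinarith

theorem empirical_variance_concentration_general
    (σ δ : ℝ) (hσ : 0 < σ) (hδ₀ : 0 < δ) (hδ₁ : δ < 1)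
    (m : ℕ) (hm : 0 < m)
    (Ω : Type*) [MeasurableSpace Ω] (P : Measure Ω) [IsProbabilityMeasure P]
    (ε : Fin m → Fin 3 → Ω → ℝ)
    (hindep : iIndepFun
      (fun p : Fin m × Fin 3 => ε p.1 p.2) P)
    (hunif : ∀ i k, P.map (ε i k)
      = (volume (Set.Icc (-σ) σ))⁻¹ • volume.restrict (Set.Icc (-σ) σ)) :
    P {ω | |(1 / 3 : ℝ) * ∑ k : Fin 3,
        ((1 / (m : ℝ)) * ∑ i : Fin m,
          (ε i k ω - (1 / (m : ℝ)) * ∑ i' : Fin m, ε i' k ω) ^ 2)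
        - σ ^ 2 / 3|
      ≤ 4 * σ ^ 2 * Real.sqrt ((2 / (3 * (m : ℝ))) * Real.log (2 / δ))}
    ≥ ENNReal.ofReal (1 - δ) := by
  set t := √(2 / (3 * (m : ℝ)) * log (2 / δ)) with ht
  have hL : 0 < log (2 / δ) := log_pos (by rw [lt_div_iff₀ hδ₀]; linarith)
  have ht₀ : 0 < t := sqrt_pos.2 (by positivity)
  have hmt : m * t ^ 2 = 2 / 3 * log (2 / δ) := by
    rw [ht, sq_sqrt (by positivity)]
    field_simp
  have hV (ω : Ω) : avgEmpiricalVariance (fun i k => ε i k ω) = (1 / 3 : ℝ) * ∑ k : Fin 3,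
      ((1 / (m : ℝ)) * ∑ i : Fin m, (ε i k ω - (1 / (m : ℝ)) * ∑ i' : Fin m, ε i' k ω) ^ 2) := by
    simp [avgEmpiricalVariance, empiricalVariance]
  refine ofReal_one_sub_le_of_measure_compl_le hδ₀.le ?_
  simp only [← hV, compl_ofPred, not_le]
  -- `hunif i k` is `pdf.IsUniform (ε i k) (Icc (-σ) σ) P` by definition.
  rcases le_or_gt (1 / 6) t with ht₁ | ht₁
  · refine (measure_mono_null (fun ω hω h => ?_)
      (ae_iff.1 (ae_avgEmpiricalVariance_mem_Icc hunif hσ))).trans_le bot_le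
    have := mul_le_mul_of_nonneg_left ht₁ (sq_nonneg σ)
    rcases lt_abs.1 hω.out with hω | hω <;> linarith [h.1, h.2]
  calc _ ≤ _ := measure_lt_abs_avgEmpiricalVariance_sub_le hm hindep hunif hσ ht₀.le
    _ ≤ ENNReal.ofReal δ := by
        simpa using ENNReal.ofReal_le_ofReal (two_mul_exp_add_three_mul_le hδ₀ hδ₁ ht₀ ht₁ hmt)

/-- Lemma on the concentration of the averaged empirical variance of
3m i.i.d. uniform random variables on `[-σ, σ]`. -/
theorem empirical_variance_concentration
    (σ δ : ℝ) (hσ : 0 < σ) (hδ₀ : 0 < δ) (hδ₁ : δ < 1)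
    (m : ℕ) (hm : 0 < m)
    (Ω : Type*) [MeasurableSpace Ω] (P : Measure Ω) [IsProbabilityMeasure P]
    (ε : Fin m → Fin 3 → Ω → ℝ)
    (hmeas : ∀ i k, Measurable (ε i k))
    (hindep : iIndepFun
      (fun p : Fin m × Fin 3 => ε p.1 p.2) P)
    (hunif : ∀ i k, P.map (ε i k)
      = (volume (Set.Icc (-σ) σ))⁻¹ • volume.restrict (Set.Icc (-σ) σ)) :
    P {ω | |(1 / 3 : ℝ) * ∑ k : Fin 3,
        ((1 / (m : ℝ)) * ∑ i : Fin m,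
          (ε i k ω - (1 / (m : ℝ)) * ∑ i' : Fin m, ε i' k ω) ^ 2)
        - σ ^ 2 / 3|
      ≤ 4 * σ ^ 2 * Real.sqrt ((2 / (3 * (m : ℝ))) * Real.log (2 / δ))}
    ≥ ENNReal.ofReal (1 - δ) :=
  empirical_variance_concentration_general σ δ hσ hδ₀ hδ₁ m hm Ω P ε hindep hunif
end

section
/- Let c ∈ (0, 0.03), let σ > 0 and σ_j > 0 with 1 ≤ σ/σ_j ≤ 2, let C be a real number with 1 - 2c ≤ C ≤ 1 + 2c, and let v, r ∈ ℝ³ with ‖r‖ ≤ √3 · σ and ‖v‖ ≤ c · σ_j. Then C³ · exp( -C² · (2 (v · r) + ‖v‖²) / (2σ_j²) ) · exp( -(C² - 1) · ‖r‖² / (2σ_j²) ) ∈ [1 - 100c, 1 + 100c]. -/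
open RealInnerProductSpace

/-!
The two exponents combine into `(‖r‖² - C²‖r + v‖²) / (2σⱼ²)`. Factoring the numerator as
`(‖r‖ - C‖r + v‖)(‖r‖ + C‖r + v‖)`, the first factor is `O(c σⱼ)` because `C` is `2c`-close to `1`
and `‖v‖ ≤ c σⱼ`, while the second is `O(σⱼ)`; so the exponent is at most `29c` in absolute value.
It remains to check that `C³ e^x` stays in `[1 - 100c, 1 + 100c]` for `|C - 1| ≤ 2c`,
`|x| ≤ 29c` and `c < 0.03`, using `1 + x ≤ e^x ≤ 1 / (1 - x/2)²`.
-/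

lemma neg_add_neg_eq_norm_sq_sub_sq_mul_norm_add_sq {F : Type*} [NormedAddCommGroup F]
    [InnerProductSpace ℝ F] (C : ℝ) (v r : F) :
    -(C ^ 2 * (2 * ⟪v, r⟫ + ‖v‖ ^ 2)) + -((C ^ 2 - 1) * ‖r‖ ^ 2)
      = ‖r‖ ^ 2 - C ^ 2 * ‖r + v‖ ^ 2 := by
  rw [norm_add_sq_real, real_inner_comm]
  ring

section SeminormedAddCommGroup

variable {E : Type*} [SeminormedAddCommGroup E]

lemma abs_norm_sq_sub_sq_mul_norm_add_sq_le {C : ℝ} (hC : 0 ≤ C) (v r : E) :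
    |‖r‖ ^ 2 - C ^ 2 * ‖r + v‖ ^ 2|
      ≤ (|1 - C| * ‖r‖ + C * ‖v‖) * (‖r‖ + C * (‖r‖ + ‖v‖)) := by
  have hshift : |‖r + v‖ - ‖r‖| ≤ ‖v‖ := by simpa using abs_norm_sub_norm_le (r + v) r
  have hdiff : |‖r‖ - C * ‖r + v‖| ≤ |1 - C| * ‖r‖ + C * ‖v‖ := calc
    |‖r‖ - C * ‖r + v‖| = |(1 - C) * ‖r‖ - C * (‖r + v‖ - ‖r‖)| := by ring_nf
    _ ≤ |(1 - C) * ‖r‖| + |C * (‖r + v‖ - ‖r‖)| := abs_sub _ _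
    _ ≤ |1 - C| * ‖r‖ + C * ‖v‖ := by
      rw [abs_mul, abs_mul, abs_norm, abs_of_nonneg hC]
      gcongr
  have hsum : ‖r‖ + C * ‖r + v‖ ≤ ‖r‖ + C * (‖r‖ + ‖v‖) := by
    gcongr
    exact norm_add_le r v
  calc |‖r‖ ^ 2 - C ^ 2 * ‖r + v‖ ^ 2|
      = |‖r‖ - C * ‖r + v‖| * (‖r‖ + C * ‖r + v‖) := by
        rw [← abs_of_nonneg (by positivity : 0 ≤ ‖r‖ + C * ‖r + v‖), ← abs_mul]
        ring_nf
    _ ≤ _ := mul_le_mul hdiff hsum (by positivity) (by positivity)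

lemma abs_norm_sq_sub_sq_mul_norm_add_sq_div_le {c C s : ℝ} (hc₀ : 0 < c) (hc₁ : c < 0.03)
    (hs : 0 < s) (hC₁ : 1 - 2 * c ≤ C) (hC₂ : C ≤ 1 + 2 * c) {v r : E}
    (hr : ‖r‖ ≤ 2 * √3 * s) (hv : ‖v‖ ≤ c * s) :
    |(‖r‖ ^ 2 - C ^ 2 * ‖r + v‖ ^ 2) / (2 * s ^ 2)| ≤ 29 * c := by
  have hsqrt3 : √3 ≤ 1.74 := by rw [Real.sqrt_le_left] <;> norm_num
  have hr' : ‖r‖ ≤ 3.48 * s := by nlinarith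
  have hC : |1 - C| ≤ 2 * c := abs_le.mpr ⟨by linarith, by linarith⟩
  have hC₀ : 0 ≤ C := by linarith
  -- `2c · 3.48 + 1.06 c ≤ 8.02 c` and `3.48 + 1.06 · 3.51 ≤ 7.21`, with `8.02 · 7.21 ≤ 2 · 29`
  have hfirst : |1 - C| * ‖r‖ + C * ‖v‖ ≤ 8.02 * c * s := by
    have := mul_le_mul hC hr' (norm_nonneg r) (by positivity)
    have := mul_le_mul hC₂ hv (norm_nonneg v) (by positivity)
    nlinarith [mul_pos hc₀ hs]
  have hsecond : ‖r‖ + C * (‖r‖ + ‖v‖) ≤ 7.21 * s := by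
    have := mul_le_mul hC₂ (add_le_add hr' hv) (by positivity) (by positivity)
    nlinarith [mul_pos hs (by linarith : (0 : ℝ) < 0.03 - c)]
  have hprod := (abs_norm_sq_sub_sq_mul_norm_add_sq_le hC₀ v r).trans
    (mul_le_mul hfirst hsecond (by positivity) (by positivity))
  rw [abs_div, abs_of_pos (by positivity : 0 < 2 * s ^ 2), div_le_iff₀ (by positivity)]
  nlinarith

end SeminormedAddCommGroup

lemma Real.exp_two_mul_le_one_div_one_sub_sq {x : ℝ} (h₀ : 0 ≤ x) (h₁ : x < 1) :
    Real.exp (2 * x) ≤ (1 / (1 - x)) ^ 2 := by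
  rw [two_mul, Real.exp_add, ← sq]
  gcongr
  exact Real.exp_bound_div_one_sub_of_interval h₀ h₁

lemma one_sub_le_pow_three_mul_exp {c C x : ℝ} (hc₀ : 0 < c) (hc₁ : c < 0.03)
    (hC : 1 - 2 * c ≤ C) (hx : -(29 * c) ≤ x) :
    1 - 100 * c ≤ C ^ 3 * Real.exp x := by
  have hexp : 1 - 29 * c ≤ Real.exp x := by linarith [Real.add_one_le_exp x]
  have hcube : (1 - 2 * c) ^ 3 ≤ C ^ 3 := pow_le_pow_left₀ (by linarith) hC 3
  nlinarith [mul_le_mul hcube hexp (by linarith) (pow_nonneg (by linarith) 3),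
    pow_pos hc₀ 3, pow_pos hc₀ 4]

lemma pow_three_mul_exp_le_one_add {c C x : ℝ} (hc₀ : 0 < c) (hc₁ : c < 0.03)
    (hC₀ : 0 ≤ C) (hC : C ≤ 1 + 2 * c) (hx : x ≤ 29 * c) :
    C ^ 3 * Real.exp x ≤ 1 + 100 * c := by
  have hexp : Real.exp x ≤ (1 / (1 - 14.5 * c)) ^ 2 := calc
    Real.exp x ≤ Real.exp (2 * (14.5 * c)) := Real.exp_le_exp.mpr (by linarith)
    _ ≤ _ := Real.exp_two_mul_le_one_div_one_sub_sq (by positivity) (by linarith)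
  have hcube : C ^ 3 ≤ (1 + 2 * c) ^ 3 := pow_le_pow_left₀ hC₀ hC 3
  -- the difference of the two sides is `c (65 - 2701.75 c + 21017 c²)`, positive up to `c ≈ 0.032`
  have hpoly : (1 + 2 * c) ^ 3 ≤ (1 + 100 * c) * (1 - 14.5 * c) ^ 2 := by
    nlinarith [mul_pos hc₀ (by linarith : (0 : ℝ) < 0.03 - c),
      mul_pos (mul_pos hc₀ hc₀) (by linarith : (0 : ℝ) < 0.03 - c)]
  calc C ^ 3 * Real.exp x ≤ (1 + 2 * c) ^ 3 * (1 / (1 - 14.5 * c)) ^ 2 :=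
        mul_le_mul hcube hexp (by positivity) (by positivity)
    _ ≤ 1 + 100 * c := by
        rw [div_pow, one_pow, mul_one_div, div_le_iff₀ (by nlinarith)]
        exact hpoly

theorem close_to_one_general
    (c σ σj C : ℝ) (hc₀ : 0 < c) (hc₁ : c < 0.03)
    (hσj : 0 < σj) (hratio₂ : σ / σj ≤ 2)
    (hC₁ : 1 - 2 * c ≤ C) (hC₂ : C ≤ 1 + 2 * c)
    (v r : EuclideanSpace ℝ (Fin 3)) (hr : ‖r‖ ≤ Real.sqrt 3 * σ) (hv : ‖v‖ ≤ c * σj) :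
    C ^ 3 * Real.exp (-(C ^ 2 * (2 * ⟪v, r⟫ + ‖v‖ ^ 2)) / (2 * σj ^ 2))
        * Real.exp (-((C ^ 2 - 1) * ‖r‖ ^ 2) / (2 * σj ^ 2))
      ∈ Set.Icc (1 - 100 * c) (1 + 100 * c) := by
  have hσ : σ ≤ 2 * σj := (div_le_iff₀ hσj).mp hratio₂
  have hr' : ‖r‖ ≤ 2 * √3 * σj := by nlinarith [Real.sqrt_nonneg 3]
  rw [mul_assoc, ← Real.exp_add, ← add_div, neg_add_neg_eq_norm_sq_sub_sq_mul_norm_add_sq]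
  have hx := abs_le.mp (abs_norm_sq_sub_sq_mul_norm_add_sq_div_le hc₀ hc₁ hσj hC₁ hC₂ hr' hv)
  exact ⟨one_sub_le_pow_three_mul_exp hc₀ hc₁ hC₁ hx.1,
    pow_three_mul_exp_le_one_add hc₀ hc₁ (by linarith) hC₂ hx.2⟩

/-- Lemma `close_to_1`: the product of the correction factors lies in
`[1 - 100c, 1 + 100c]`. Here `r` is the ground-truth residual, `v` the pose
estimation error, and `C` the ratio of true to estimated noise scale. -/
theorem close_to_one
    (c σ σj C : ℝ) (hc₀ : 0 < c) (hc₁ : c < 0.03)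
    (hσ : 0 < σ) (hσj : 0 < σj) (hratio₁ : 1 ≤ σ / σj) (hratio₂ : σ / σj ≤ 2)
    (hC₁ : 1 - 2 * c ≤ C) (hC₂ : C ≤ 1 + 2 * c)
    (v r : EuclideanSpace ℝ (Fin 3)) (hr : ‖r‖ ≤ Real.sqrt 3 * σ) (hv : ‖v‖ ≤ c * σj) :
    C ^ 3 * Real.exp (-(C ^ 2 * (2 * ⟪v, r⟫ + ‖v‖ ^ 2)) / (2 * σj ^ 2))
        * Real.exp (-((C ^ 2 - 1) * ‖r‖ ^ 2) / (2 * σj ^ 2))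
      ∈ Set.Icc (1 - 100 * c) (1 + 100 * c) :=
  close_to_one_general c σ σj C hc₀ hc₁ hσj hratio₂ hC₁ hC₂ v r hr hv
end
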